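/- arXiv:hep-th/0208113 — 4 statements merged into one kernel-verified Lean document; each statement's English description precedes it below -/
import Mathlib

section
/- Let H be a Hilbert space, Ω ∈ H a unit vector, and U : ℝ → unitary operators on H a strongly continuous one-parameter group with positive self-adjoint generator P (i.e., U(a) = exp(iaP) with P ≥ 0) satisfying U(a)Ω = Ω for all a. Suppose A, A' are bounded operators such that ⟨Ω, A U(a) A' Ω⟩ = ⟨Ω, A' U(a)* A Ω⟩ for all a ∈ ℝ. Then the function a ↦ ⟨Ω, A U(a) A' Ω⟩ is constant in a. -/
open Complex MeasureTheory
open scoped ComplexInnerProductSpace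

open intervalIntegral Set Asymptotics
open scoped Interval

noncomputable def bdRectLTC (h : ℂ → ℂ) (a b c d : ℝ) : ℂ :=
  (∫ x : ℝ in a..b, h (x + c * I)) - (∫ x : ℝ in a..b, h (x + d * I)) +
    I • (∫ y : ℝ in c..d, h (b + y * I)) - I • (∫ y : ℝ in c..d, h (a + y * I))

lemma bdRectLTC_eq_zero {h : ℂ → ℂ} {a b c d : ℝ}
    (Hc : ContinuousOn h ([[a, b]] ×ℂ [[c, d]]))
    (Hd : DifferentiableOn ℂ h (Ioo (min a b) (max a b) ×ℂ Ioo (min c d) (max c d))) :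
    bdRectLTC h a b c d = 0 := by
  have := integral_boundary_rect_eq_zero_of_continuousOn_of_differentiableOn h
    ⟨a, c⟩ ⟨b, d⟩ Hc Hd
  exact this

lemma bdRectLTC_split {h : ℂ → ℂ} (hc : Continuous h) (a b c d e : ℝ) :
    bdRectLTC h a b c d = bdRectLTC h a b c e + bdRectLTC h a b e d := by
  have hib : IntervalIntegrable (fun y : ℝ => h (b + y * I)) volume c e ∧
      IntervalIntegrable (fun y : ℝ => h (b + y * I)) volume e d := by
    constructor <;> exact (hc.comp (by continuity)).intervalIntegrable _ _
  have hia : IntervalIntegrable (fun y : ℝ => h (a + y * I)) volume c e ∧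
      IntervalIntegrable (fun y : ℝ => h (a + y * I)) volume e d := by
    constructor <;> exact (hc.comp (by continuity)).intervalIntegrable _ _
  have e1 := integral_add_adjacent_intervals hib.1 hib.2
  have e2 := integral_add_adjacent_intervals hia.1 hia.2
  simp only [bdRectLTC, smul_eq_mul]
  linear_combination I * e1.symm - I * e2.symm

lemma moreraLTC {h : ℂ → ℂ} (hc : Continuous h)
    (h0 : ∀ a b c d : ℝ, bdRectLTC h a b c d = 0) : Differentiable ℂ h := by
  set F : ℂ → ℂ := fun z =>
    (∫ x : ℝ in (0:ℝ)..z.re, h x) + I * ∫ y : ℝ in (0:ℝ)..z.im, h (z.re + y * I) with hF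
  have hint1 : ∀ (c : ℝ) (u v : ℝ),
      IntervalIntegrable (fun x : ℝ => h (x + c * I)) volume u v :=
    fun c u v => (hc.comp (by continuity)).intervalIntegrable _ _
  have hint2 : ∀ (b : ℝ) (u v : ℝ),
      IntervalIntegrable (fun y : ℝ => h (b + y * I)) volume u v :=
    fun b u v => (hc.comp (by continuity)).intervalIntegrable _ _
  have hint0 : ∀ u v : ℝ, IntervalIntegrable (fun x : ℝ => h x) volume u v :=
    fun u v => (hc.comp continuous_ofReal).intervalIntegrable _ _
  have key : ∀ z₀ z : ℂ, F z - F z₀ =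
      (∫ x : ℝ in z₀.re..z.re, h (x + z₀.im * I)) +
        I * ∫ y : ℝ in z₀.im..z.im, h (z.re + y * I) := by
    intro z₀ z
    have e1 := integral_add_adjacent_intervals (hint0 0 z₀.re) (hint0 z₀.re z.re)
    have e2 := integral_add_adjacent_intervals (hint2 z.re 0 z₀.im) (hint2 z.re z₀.im z.im)
    have e3 := h0 z₀.re z.re 0 z₀.im
    simp only [bdRectLTC, smul_eq_mul, Complex.ofReal_zero, zero_mul, add_zero] at e3
    simp only [hF]
    linear_combination e1.symm + I * e2.symm + e3
  have hder : ∀ z₀ : ℂ, HasDerivAt F (h z₀) z₀ := by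
    intro z₀
    rw [hasDerivAt_iff_isLittleO, isLittleO_iff]
    intro ε hε
    obtain ⟨δ, hδ, hδ'⟩ := Metric.continuousAt_iff.mp hc.continuousAt (ε / 2) (by positivity)
    filter_upwards [Metric.ball_mem_nhds z₀ (show (0:ℝ) < δ / 2 by positivity)] with z hz
    rw [Metric.mem_ball, dist_eq_norm] at hz
    have hre : |z.re - z₀.re| ≤ ‖z - z₀‖ := by
      simpa using Complex.abs_re_le_norm (z - z₀)
    have him : |z.im - z₀.im| ≤ ‖z - z₀‖ := by
      simpa using Complex.abs_im_le_norm (z - z₀)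
    have e4 : (∫ x : ℝ in z₀.re..z.re, (h (x + z₀.im * I) - h z₀)) =
        (∫ x : ℝ in z₀.re..z.re, h (x + z₀.im * I)) - ((z.re : ℂ) - z₀.re) * h z₀ := by
      rw [intervalIntegral.integral_sub (hint1 _ _ _) intervalIntegrable_const,
        intervalIntegral.integral_const, Complex.real_smul]
      push_cast; ring
    have e5 : (∫ y : ℝ in z₀.im..z.im, (h (z.re + y * I) - h z₀)) =
        (∫ y : ℝ in z₀.im..z.im, h (z.re + y * I)) - ((z.im : ℂ) - z₀.im) * h z₀ := by
      rw [intervalIntegral.integral_sub (hint2 _ _ _) intervalIntegrable_const,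
        intervalIntegral.integral_const, Complex.real_smul]
      push_cast; ring
    have hzz : z - z₀ = ((z.re : ℂ) - z₀.re) + ((z.im : ℂ) - z₀.im) * I := by
      simp [Complex.ext_iff]
    have main : F z - F z₀ - (z - z₀) • h z₀ =
        (∫ x : ℝ in z₀.re..z.re, (h (x + z₀.im * I) - h z₀)) +
          I * ∫ y : ℝ in z₀.im..z.im, (h (z.re + y * I) - h z₀) := by
      rw [key z₀ z, smul_eq_mul, e4, e5, hzz]; ring
    rw [main]
    have b1 : ‖∫ x : ℝ in z₀.re..z.re, (h (x + z₀.im * I) - h z₀)‖ ≤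
        (ε / 2) * |z.re - z₀.re| := by
      apply intervalIntegral.norm_integral_le_of_norm_le_const
      intro x hx
      have hxa : |x - z₀.re| ≤ |z.re - z₀.re| := by
        have h1 : z.re - z₀.re ≤ |z.re - z₀.re| := le_abs_self _
        have h2 : z₀.re - z.re ≤ |z.re - z₀.re| := by rw [abs_sub_comm]; exact le_abs_self _
        rcases Set.mem_uIoc.mp hx with ⟨ha, hb⟩ | ⟨ha, hb⟩ <;> rw [abs_sub_le_iff] <;>
          constructor <;> linarith
      have hdist : dist ((x : ℂ) + z₀.im * I) z₀ < δ := by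
        rw [dist_eq_norm]
        have : (x : ℂ) + z₀.im * I - z₀ = ((x - z₀.re : ℝ) : ℂ) := by
          simp [Complex.ext_iff]
        rw [this, Complex.norm_real]
        calc ‖x - z₀.re‖ = |x - z₀.re| := rfl
          _ ≤ |z.re - z₀.re| := hxa
          _ ≤ ‖z - z₀‖ := hre
          _ < δ / 2 := hz
          _ < δ := by linarith
      have := hδ' hdist
      rw [dist_eq_norm] at this
      exact le_of_lt this
    have b2 : ‖∫ y : ℝ in z₀.im..z.im, (h (z.re + y * I) - h z₀)‖ ≤
        (ε / 2) * |z.im - z₀.im| := by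
      apply intervalIntegral.norm_integral_le_of_norm_le_const
      intro y hy
      have hya : |y - z₀.im| ≤ |z.im - z₀.im| := by
        have h1 : z.im - z₀.im ≤ |z.im - z₀.im| := le_abs_self _
        have h2 : z₀.im - z.im ≤ |z.im - z₀.im| := by rw [abs_sub_comm]; exact le_abs_self _
        rcases Set.mem_uIoc.mp hy with ⟨ha, hb⟩ | ⟨ha, hb⟩ <;> rw [abs_sub_le_iff] <;>
          constructor <;> linarith
      have hdist : dist ((z.re : ℂ) + y * I) z₀ < δ := by
        rw [dist_eq_norm]
        have h3 : ‖(z.re : ℂ) + y * I - z₀‖ ≤ |z.re - z₀.re| + |y - z₀.im| := by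
          have := Complex.norm_le_abs_re_add_abs_im ((z.re : ℂ) + y * I - z₀)
          simpa using this
        calc ‖(z.re : ℂ) + y * I - z₀‖ ≤ |z.re - z₀.re| + |y - z₀.im| := h3
          _ ≤ ‖z - z₀‖ + ‖z - z₀‖ := by
              have := hya.trans him; linarith [hre]
          _ < δ := by linarith
      have := hδ' hdist
      rw [dist_eq_norm] at this
      exact le_of_lt this
    calc ‖(∫ x : ℝ in z₀.re..z.re, (h (x + z₀.im * I) - h z₀)) +
          I * ∫ y : ℝ in z₀.im..z.im, (h (z.re + y * I) - h z₀)‖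
        ≤ ‖∫ x : ℝ in z₀.re..z.re, (h (x + z₀.im * I) - h z₀)‖ +
          ‖I * ∫ y : ℝ in z₀.im..z.im, (h (z.re + y * I) - h z₀)‖ := norm_add_le _ _
      _ = ‖∫ x : ℝ in z₀.re..z.re, (h (x + z₀.im * I) - h z₀)‖ +
          ‖∫ y : ℝ in z₀.im..z.im, (h (z.re + y * I) - h z₀)‖ := by
          rw [norm_mul, Complex.norm_I, one_mul]
      _ ≤ (ε / 2) * |z.re - z₀.re| + (ε / 2) * |z.im - z₀.im| := add_le_add b1 b2
      _ ≤ (ε / 2) * ‖z - z₀‖ + (ε / 2) * ‖z - z₀‖ := by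
          gcongr
      _ = ε * ‖z - z₀‖ := by ring
  have hFdiff : Differentiable ℂ F := fun z => (hder z).differentiableAt
  have hderiv : deriv F = h := funext fun z => (hder z).deriv
  have hFan : AnalyticOnNhd ℂ F Set.univ :=
    hFdiff.differentiableOn.analyticOnNhd isOpen_univ
  have := hFan.deriv
  rw [hderiv] at this
  exact fun z => (this z (Set.mem_univ z)).differentiableAt


/-- Let `U` be a strongly continuous one-parameter unitary group on a Hilbert space `H`
with a *positive* self-adjoint generator (expressed, equivalently, by the existence of a
holomorphic contractive extension `T` of `U` to the closed upper half-plane, i.e.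
`U(a) = exp(iaP)` with `P ≥ 0`), leaving a unit vector `Ω` invariant.  If bounded operators
`A, A'` satisfy `⟨Ω, A U(a) A' Ω⟩ = ⟨Ω, A' U(a)* A Ω⟩` for all `a`, then
`a ↦ ⟨Ω, A U(a) A' Ω⟩` is constant. -/
theorem lightlike_translation_constancy
    {H : Type*} [NormedAddCommGroup H] [InnerProductSpace ℂ H] [CompleteSpace H]
    (Ω : H) (hΩ : ‖Ω‖ = 1)
    (U : ℝ → H →L[ℂ] H)
    (hUun : ∀ a, U a ∈ unitary (H →L[ℂ] H))
    (hU0 : U 0 = 1)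
    (hUgrp : ∀ a b, U (a + b) = (U a).comp (U b))
    (hUcont : ∀ ξ : H, Continuous fun a => U a ξ)
    (hUΩ : ∀ a, U a Ω = Ω)
    -- positivity of the generator: contractive holomorphic extension to the upper half-plane
    (T : ℂ → H →L[ℂ] H)
    (hTr : ∀ a : ℝ, T (a : ℂ) = U a)
    (hTb : ∀ z : ℂ, 0 ≤ z.im → ‖T z‖ ≤ 1)
    (hTh : ∀ ξ η : H, DifferentiableOn ℂ (fun z => ⟪ξ, T z η⟫) {z : ℂ | 0 < z.im})
    (hTc : ∀ ξ η : H, ContinuousOn (fun z => ⟪ξ, T z η⟫) {z : ℂ | 0 ≤ z.im})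
    (A A' : H →L[ℂ] H)
    (hsym : ∀ a : ℝ,
      ⟪Ω, A (U a (A' Ω))⟫ = ⟪Ω, A' ((ContinuousLinearMap.adjoint (U a)) (A Ω))⟫) :
    ∀ a b : ℝ, ⟪Ω, A (U a (A' Ω))⟫ = ⟪Ω, A (U b (A' Ω))⟫ := by
  classical
  have hadj : ∀ a : ℝ, ContinuousLinearMap.adjoint (U a) = U (-a) := by
    intro a
    have h1 : U a * U (-a) = 1 := by
      rw [ContinuousLinearMap.mul_def, ← hUgrp]; simp [hU0]
    have h3 : star (U a) * U a = 1 := (Unitary.mem_iff.mp (hUun a)).1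
    calc ContinuousLinearMap.adjoint (U a) = star (U a) :=
          (ContinuousLinearMap.star_eq_adjoint _).symm
      _ = star (U a) * (U a * U (-a)) := by rw [h1, mul_one]
      _ = (star (U a) * U a) * U (-a) := by rw [mul_assoc]
      _ = U (-a) := by rw [h3, one_mul]
  set ξ : H := ContinuousLinearMap.adjoint A Ω with hξ
  set ξ' : H := ContinuousLinearMap.adjoint A' Ω with hξ'
  set f : ℂ → ℂ := fun z => ⟪ξ, T z (A' Ω)⟫ with hfdef
  set g : ℂ → ℂ := fun z => ⟪ξ', T z (A Ω)⟫ with hgdef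
  have hval : ∀ x : ℝ, f (x : ℂ) = ⟪Ω, A (U x (A' Ω))⟫ := by
    intro x
    simp only [hfdef, hTr x, hξ]
    exact ContinuousLinearMap.adjoint_inner_left A (U x (A' Ω)) Ω
  have hval' : ∀ x : ℝ, g (x : ℂ) = ⟪Ω, A' (U x (A Ω))⟫ := by
    intro x
    simp only [hgdef, hTr x, hξ']
    exact ContinuousLinearMap.adjoint_inner_left A' (U x (A Ω)) Ω
  have hbd : ∀ x : ℝ, f (x : ℂ) = g (-(x : ℂ)) := by
    intro x
    have h1 := hsym x
    rw [hadj x] at h1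
    have h2 : g (-(x : ℂ)) = ⟪Ω, A' (U (-x) (A Ω))⟫ := by
      rw [show (-(x : ℂ)) = ((-x : ℝ) : ℂ) by push_cast; ring]
      exact hval' (-x)
    rw [hval x, h1, h2]
  set h : ℂ → ℂ := fun z => if 0 ≤ z.im then f z else g (-z) with hhdef
  have hgneg : ContinuousOn (fun z : ℂ => g (-z)) {z : ℂ | z.im ≤ 0} := by
    apply (hTc ξ' (A Ω)).comp continuous_neg.continuousOn
    intro z hz
    simp only [Set.mem_setOf_eq, Complex.neg_im] at *
    linarith
  have hcont : Continuous h := by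
    apply continuous_if
    · intro z hz
      rw [Complex.frontier_setOf_le_im] at hz
      have hz0 : z = (z.re : ℂ) := by
        rw [Complex.ext_iff]
        simp only [Set.mem_setOf_eq] at hz
        simp [hz]
      rw [hz0]
      exact hbd z.re
    · rw [(isClosed_le continuous_const Complex.continuous_im).closure_eq]
      exact hTc ξ (A' Ω)
    · have : {z : ℂ | ¬ 0 ≤ z.im} = {z : ℂ | z.im < 0} := by
        ext z; simp [not_le]
      rw [this, Complex.closure_setOf_im_lt]
      exact hgneg
  have hb' : ∀ (B B' : H →L[ℂ] H) (w : ℂ), 0 ≤ w.im →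
      ‖(⟪ContinuousLinearMap.adjoint B Ω, T w (B' Ω)⟫ : ℂ)‖ ≤ ‖B‖ * ‖B'‖ := by
    intro B B' w hw
    have hB : ‖ContinuousLinearMap.adjoint B Ω‖ ≤ ‖B‖ := by
      calc ‖ContinuousLinearMap.adjoint B Ω‖ ≤ ‖ContinuousLinearMap.adjoint B‖ * ‖Ω‖ :=
            (ContinuousLinearMap.adjoint B).le_opNorm Ω
        _ = ‖B‖ := by
            rw [hΩ, mul_one]
            exact LinearIsometryEquiv.norm_map ContinuousLinearMap.adjoint B
    have hB' : ‖T w (B' Ω)‖ ≤ ‖B'‖ := by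
      calc ‖T w (B' Ω)‖ ≤ ‖T w‖ * ‖B' Ω‖ := (T w).le_opNorm _
        _ ≤ 1 * (‖B'‖ * ‖Ω‖) :=
            mul_le_mul (hTb w hw) (B'.le_opNorm Ω) (norm_nonneg _) zero_le_one
        _ = ‖B'‖ := by rw [hΩ, mul_one, one_mul]
    calc ‖(⟪ContinuousLinearMap.adjoint B Ω, T w (B' Ω)⟫ : ℂ)‖
        ≤ ‖ContinuousLinearMap.adjoint B Ω‖ * ‖T w (B' Ω)‖ := norm_inner_le_norm _ _
      _ ≤ ‖B‖ * ‖B'‖ := mul_le_mul hB hB' (norm_nonneg _) (norm_nonneg _)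
  have hbound : ∀ z : ℂ, ‖h z‖ ≤ ‖A‖ * ‖A'‖ := by
    intro z
    simp only [hhdef]
    split_ifs with hzi
    · exact hb' A A' z hzi
    · rw [mul_comm]
      exact hb' A' A (-z) (by simp only [Complex.neg_im]; linarith [not_le.mp hzi])
  have hrect : ∀ a b c d : ℝ, bdRectLTC h a b c d = 0 := by
    have top : ∀ a b c d : ℝ, 0 ≤ c → 0 ≤ d → bdRectLTC h a b c d = 0 := by
      intro a b c d hc0 hd0
      apply bdRectLTC_eq_zero hcont.continuousOn
      have hsub : (Ioo (min a b) (max a b) ×ℂ Ioo (min c d) (max c d)) ⊆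
          {z : ℂ | 0 < z.im} := by
        intro z hz
        rw [Complex.mem_reProdIm] at hz
        exact lt_of_le_of_lt (le_min hc0 hd0) hz.2.1
      refine ((hTh ξ (A' Ω)).mono hsub).congr ?_
      intro z hz
      have : 0 ≤ z.im := le_of_lt (hsub hz)
      simp only [hhdef, if_pos this, hfdef]
    have bot : ∀ a b c d : ℝ, c ≤ 0 → d ≤ 0 → bdRectLTC h a b c d = 0 := by
      intro a b c d hc0 hd0
      apply bdRectLTC_eq_zero hcont.continuousOn
      have hsub : (Ioo (min a b) (max a b) ×ℂ Ioo (min c d) (max c d)) ⊆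
          {z : ℂ | z.im < 0} := by
        intro z hz
        rw [Complex.mem_reProdIm] at hz
        exact lt_of_lt_of_le hz.2.2 (max_le hc0 hd0)
      have hdg : DifferentiableOn ℂ (fun z : ℂ => g (-z)) {z : ℂ | z.im < 0} := by
        apply (hTh ξ' (A Ω)).comp differentiable_neg.differentiableOn
        intro z hz
        simp only [Set.mem_setOf_eq, Complex.neg_im] at *
        linarith
      refine (hdg.mono hsub).congr ?_
      intro z hz
      have : ¬ (0 ≤ z.im) := not_le.mpr (hsub hz)
      simp only [hhdef, if_neg this]
    intro a b c d
    have t1 : bdRectLTC h a b c 0 = 0 := by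
      rcases le_total 0 c with hc | hc
      exacts [top a b c 0 hc le_rfl, bot a b c 0 hc le_rfl]
    have t2 : bdRectLTC h a b 0 d = 0 := by
      rcases le_total 0 d with hd | hd
      exacts [top a b 0 d le_rfl hd, bot a b 0 d le_rfl hd]
    rw [bdRectLTC_split hcont a b c d 0, t1, t2, add_zero]
  have hdiff : Differentiable ℂ h := moreraLTC hcont hrect
  have hbdd : Bornology.IsBounded (Set.range h) := by
    rw [isBounded_iff_forall_norm_le]
    exact ⟨‖A‖ * ‖A'‖, by rintro x ⟨z, rfl⟩; exact hbound z⟩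
  intro a b
  have hkey := hdiff.apply_eq_apply_of_bounded hbdd (a : ℂ) (b : ℂ)
  have ha : h (a : ℂ) = f (a : ℂ) := if_pos (by simp)
  have hb2 : h (b : ℂ) = f (b : ℂ) := if_pos (by simp)
  rw [← hval a, ← hval b, ← ha, ← hb2]
  exact hkey
end

section
/- Under the hypotheses of the previous statement, if additionally lim_{a→∞} ⟨Ω, A U(a) A' Ω⟩ = ⟨Ω, A Ω⟩·⟨Ω, A' Ω⟩ (the cluster property), then ⟨Ω, A A' Ω⟩ = ⟨Ω, A Ω⟩·⟨Ω, A' Ω⟩. -/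
open Complex Filter Set Topology ComplexConjugate
open scoped ComplexInnerProductSpace

/-! The matrix coefficients `f z = ⟪A†Ω, T z A'Ω⟫` and `g z = ⟪AΩ, T z A'†Ω⟫` are bounded and
holomorphic in the upper half-plane, and the symmetry hypothesis says `g = conj f` on the real
line. Hence `p = (f - L) (g - conj L)`, with `L = ⟪Ω, AΩ⟫⟪Ω, A'Ω⟫`, is bounded, holomorphic, and
equal to `|f - L|² ≥ 0` on the real line. Phragmén–Lindelöf applied to `exp (± i p)` shows that
`p` is real on the whole half-plane, so `p` is constant by the open mapping theorem. The cluster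
property makes this constant `0`, so `f = L` on the real line, in particular at `0`. -/

section UpperHalfPlane

variable {F : ℂ → ℂ}

/-- Phragmén–Lindelöf for `exp ∘ F`, rotated to the right half-plane. -/
theorem re_nonpos_of_re_nonpos_on_real (hF : DiffContOnCl ℂ F {z | 0 < z.im})
    (hbdd : ∃ M, ∀ z : ℂ, 0 ≤ z.im → (F z).re ≤ M) (hreal : ∀ a : ℝ, (F a).re ≤ 0)
    {z : ℂ} (hz : 0 ≤ z.im) : (F z).re ≤ 0 := by
  obtain ⟨M, hM⟩ := hbdd
  set G : ℂ → ℂ := fun w => exp (F (I * w))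
  have hG_norm : ∀ w, ‖G w‖ = Real.exp (F (I * w)).re := fun w => norm_exp _
  have hG : DiffContOnCl ℂ G {w | 0 < w.re} := by
    refine differentiable_exp.comp_diffContOnCl
      (hF.comp (differentiable_id.const_mul I).diffContOnCl fun w hw => ?_)
    simpa using hw
  have hG_bdd : ∀ w : ℂ, 0 ≤ w.re → ‖G w‖ ≤ Real.exp M := fun w hw => by
    rw [hG_norm]
    exact Real.exp_le_exp.2 (hM _ (by simpa using hw))
  have hPL : ‖G (-I * z)‖ ≤ 1 := by
    refine PhragmenLindelof.right_half_plane_of_bounded_on_real hG ?_ ?_ (fun x => ?_)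
      (by simpa using hz)
    · refine ⟨1, one_lt_two, 0, Asymptotics.IsBigO.of_bound (Real.exp M) ?_⟩
      filter_upwards [mem_inf_of_right (mem_principal_self _)] with w (hw : 0 < w.re)
      simpa using hG_bdd w hw.le
    · exact ⟨Real.exp M, eventually_map.2 <|
        (eventually_ge_atTop 0).mono fun x hx => hG_bdd x (by simpa using hx)⟩
    · have hx : I * (x * I) = ((-x : ℝ) : ℂ) := by push_cast; ring_nf; simp
      rw [hG_norm, hx]
      exact Real.exp_le_one_iff.2 (hreal _)
  have hz' : I * (-I * z) = z := by ring_nf; simp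
  rwa [hG_norm, hz', Real.exp_le_one_iff] at hPL

theorem im_eq_zero_of_im_eq_zero_on_real (hF : DiffContOnCl ℂ F {z | 0 < z.im})
    (hbdd : ∃ M, ∀ z : ℂ, 0 ≤ z.im → ‖F z‖ ≤ M) (hreal : ∀ a : ℝ, (F a).im = 0)
    {z : ℂ} (hz : 0 ≤ z.im) : (F z).im = 0 := by
  obtain ⟨M, hM⟩ := hbdd
  have hrot : ∀ c : ℂ, ‖c‖ = 1 → (∀ a : ℝ, (c * F a).re ≤ 0) → (c * F z).re ≤ 0 :=
    fun c hc hc_real => re_nonpos_of_re_nonpos_on_real (F := fun z => c * F z)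
      (hF.const_smul c) ⟨M, fun w hw => (re_le_norm _).trans <| by
        rw [norm_mul, hc, one_mul]; exact hM w hw⟩ hc_real hz
  have hI := hrot I (by simp) fun a => by simp [hreal]
  have hnegI := hrot (-I) (by simp) fun a => by simp [hreal]
  simp only [mul_re, I_re, I_im, neg_re, neg_im] at hI hnegI
  linarith

theorem eq_of_bounded_of_im_eq_zero_on_real (hF : DiffContOnCl ℂ F {z | 0 < z.im})
    (hbdd : ∃ M, ∀ z : ℂ, 0 ≤ z.im → ‖F z‖ ≤ M) (hreal : ∀ a : ℝ, (F a).im = 0)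
    {z w : ℂ} (hz : 0 ≤ z.im) (hw : 0 ≤ w.im) : F z = F w := by
  have hopen : IsOpen {z : ℂ | 0 < z.im} := isOpen_lt continuous_const continuous_im
  obtain ⟨c, hc⟩ := (hF.differentiableOn.analyticOnNhd hopen).eq_const_of_im_eq_const
    (fun x hx => im_eq_zero_of_im_eq_zero_on_real hF hbdd hreal (le_of_lt hx)) hopen
    ((convex_halfSpace_im_gt 0).isConnected ⟨I, by simp⟩)
  have hconst : EqOn F (fun _ => c) {z : ℂ | 0 ≤ z.im} :=
    Set.EqOn.of_subset_closure hc (by simpa [closure_setOfPred_lt_im] using hF.continuousOn)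
      continuousOn_const (fun x (hx : 0 < x.im) => hx.le) (closure_setOfPred_lt_im 0).ge
  rw [hconst hz, hconst hw]

end UpperHalfPlane

theorem eq_of_tendsto_of_conj_eq_on_real {f g : ℂ → ℂ} (hf : DiffContOnCl ℂ f {z | 0 < z.im})
    (hg : DiffContOnCl ℂ g {z | 0 < z.im}) (hf_bdd : ∃ C, ∀ z : ℂ, 0 ≤ z.im → ‖f z‖ ≤ C)
    (hg_bdd : ∃ C, ∀ z : ℂ, 0 ≤ z.im → ‖g z‖ ≤ C) (hfg : ∀ a : ℝ, g a = conj (f a)) {L : ℂ}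
    (hL : Tendsto (fun a : ℝ => f a) atTop (𝓝 L)) (a : ℝ) : f a = L := by
  obtain ⟨C, hC⟩ := hf_bdd
  obtain ⟨C', hC'⟩ := hg_bdd
  set p : ℂ → ℂ := fun z => (f z - L) * (g z - conj L)
  have hp_real : ∀ b : ℝ, p b = normSq (f b - L) := fun b => by
    simp only [p, hfg, ← map_sub, mul_conj]
  have hp_bdd : ∀ z : ℂ, 0 ≤ z.im → ‖p z‖ ≤ (C + ‖L‖) * (C' + ‖L‖) := fun z hz => by
    rw [norm_mul]
    refine mul_le_mul ((norm_sub_le _ _).trans (by gcongr; exact hC z hz))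
      ((norm_sub_le _ _).trans (by rw [norm_conj]; gcongr; exact hC' z hz)) (norm_nonneg _)
      ((norm_nonneg _).trans (le_add_of_le_of_nonneg (hC z hz) (norm_nonneg L)))
  have hp : DiffContOnCl ℂ p {z | 0 < z.im} := (hf.sub_const L).smul (hg.sub_const _)
  have hp_const : ∀ b : ℝ, p b = p a := fun b =>
    eq_of_bounded_of_im_eq_zero_on_real hp ⟨_, hp_bdd⟩
      (fun b => by rw [hp_real]; exact ofReal_im _) (by simp) (by simp)
  have hp_lim : Tendsto (fun b : ℝ => p b) atTop (𝓝 0) := by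
    have hg_lim : Tendsto (fun b : ℝ => g b) atTop (𝓝 (conj L)) :=
      ((continuous_conj.tendsto L).comp hL).congr fun b => (hfg b).symm
    simpa using (hL.sub_const L).mul (hg_lim.sub_const (conj L))
  have hpa : p a = 0 :=
    tendsto_nhds_unique (tendsto_const_nhds.congr fun b => (hp_const b).symm) hp_lim
  rwa [hp_real, ofReal_eq_zero, normSq_eq_zero, sub_eq_zero] at hpa

theorem norm_inner_apply_le_of_norm_le_one {𝕜 E : Type*} [RCLike 𝕜] [NormedAddCommGroup E]
    [InnerProductSpace 𝕜 E] {T : E →L[𝕜] E} (hT : ‖T‖ ≤ 1) (ξ η : E) :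
    ‖inner 𝕜 ξ (T η)‖ ≤ ‖ξ‖ * ‖η‖ :=
  (norm_inner_le_norm _ _).trans <| by gcongr; exact T.le_of_opNorm_le hT η |>.trans_eq (one_mul _)

theorem lightlike_translation_cluster_factorization_general
    {H : Type*} [NormedAddCommGroup H] [InnerProductSpace ℂ H] [CompleteSpace H]
    (Ω : H)
    (U : ℝ → H →L[ℂ] H)
    (hU0 : U 0 = 1)
    -- positivity of the generator: contractive holomorphic extension to the upper half-plane
    (T : ℂ → H →L[ℂ] H)
    (hTr : ∀ a : ℝ, T (a : ℂ) = U a)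
    (hTb : ∀ z : ℂ, 0 ≤ z.im → ‖T z‖ ≤ 1)
    (hTh : ∀ ξ η : H, DifferentiableOn ℂ (fun z => ⟪ξ, T z η⟫) {z : ℂ | 0 < z.im})
    (hTc : ∀ ξ η : H, ContinuousOn (fun z => ⟪ξ, T z η⟫) {z : ℂ | 0 ≤ z.im})
    (A A' : H →L[ℂ] H)
    (hsym : ∀ a : ℝ,
      ⟪Ω, A (U a (A' Ω))⟫ = ⟪Ω, A' ((ContinuousLinearMap.adjoint (U a)) (A Ω))⟫)
    (hclus : Filter.Tendsto (fun a : ℝ => ⟪Ω, A (U a (A' Ω))⟫) Filter.atTop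
      (nhds (⟪Ω, A Ω⟫ * ⟪Ω, A' Ω⟫))) :
    ⟪Ω, A (A' Ω)⟫ = ⟪Ω, A Ω⟫ * ⟪Ω, A' Ω⟫ := by
  have hcoeff : ∀ ξ η : H, DiffContOnCl ℂ (fun z => ⟪ξ, T z η⟫) {z : ℂ | 0 < z.im} :=
    fun ξ η => ⟨hTh ξ η, by simpa [closure_setOfPred_lt_im] using hTc ξ η⟩
  have hbdd : ∀ ξ η : H, ∃ C, ∀ z : ℂ, 0 ≤ z.im → ‖⟪ξ, T z η⟫‖ ≤ C :=
    fun ξ η => ⟨_, fun z hz => norm_inner_apply_le_of_norm_le_one (hTb z hz) ξ η⟩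
  have hf : ∀ a : ℝ, ⟪A.adjoint Ω, T a (A' Ω)⟫ = ⟪Ω, A (U a (A' Ω))⟫ := fun a => by
    rw [hTr, ContinuousLinearMap.adjoint_inner_left]
  have hfg : ∀ a : ℝ, ⟪A Ω, T a (A'.adjoint Ω)⟫ = conj ⟪A.adjoint Ω, T a (A' Ω)⟫ := fun a => by
    rw [hf, hsym, ← inner_conj_symm, hTr, ← ContinuousLinearMap.adjoint_inner_right,
      ContinuousLinearMap.adjoint_inner_left]
  have key := eq_of_tendsto_of_conj_eq_on_real (hcoeff _ _) (hcoeff _ _) (hbdd _ _) (hbdd _ _)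
    hfg (hclus.congr fun a => (hf a).symm) 0
  rwa [hf, hU0, one_apply_eq_self] at key

/-- Let `U` be a strongly continuous one-parameter unitary group on a Hilbert space `H`
with a *positive* self-adjoint generator (expressed, equivalently, by the existence of a
holomorphic contractive extension `T` of `U` to the closed upper half-plane, i.e.
`U(a) = exp(iaP)` with `P ≥ 0`), leaving a unit vector `Ω` invariant.  If bounded operators
`A, A'` satisfy `⟨Ω, A U(a) A' Ω⟩ = ⟨Ω, A' U(a)* A Ω⟩` for all `a`, and moreover the
cluster property `lim_{a→∞} ⟨Ω, A U(a) A' Ω⟩ = ⟨Ω, A Ω⟩ ⟨Ω, A' Ω⟩` holds, then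
`⟨Ω, A A' Ω⟩ = ⟨Ω, A Ω⟩ ⟨Ω, A' Ω⟩`. -/
theorem lightlike_translation_cluster_factorization
    {H : Type*} [NormedAddCommGroup H] [InnerProductSpace ℂ H] [CompleteSpace H]
    (Ω : H) (hΩ : ‖Ω‖ = 1)
    (U : ℝ → H →L[ℂ] H)
    (hUun : ∀ a, U a ∈ unitary (H →L[ℂ] H))
    (hU0 : U 0 = 1)
    (hUgrp : ∀ a b, U (a + b) = (U a).comp (U b))
    (hUcont : ∀ ξ : H, Continuous fun a => U a ξ)
    (hUΩ : ∀ a, U a Ω = Ω)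
    -- positivity of the generator: contractive holomorphic extension to the upper half-plane
    (T : ℂ → H →L[ℂ] H)
    (hTr : ∀ a : ℝ, T (a : ℂ) = U a)
    (hTb : ∀ z : ℂ, 0 ≤ z.im → ‖T z‖ ≤ 1)
    (hTh : ∀ ξ η : H, DifferentiableOn ℂ (fun z => ⟪ξ, T z η⟫) {z : ℂ | 0 < z.im})
    (hTc : ∀ ξ η : H, ContinuousOn (fun z => ⟪ξ, T z η⟫) {z : ℂ | 0 ≤ z.im})
    (A A' : H →L[ℂ] H)
    (hsym : ∀ a : ℝ,
      ⟪Ω, A (U a (A' Ω))⟫ = ⟪Ω, A' ((ContinuousLinearMap.adjoint (U a)) (A Ω))⟫)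
    (hclus : Filter.Tendsto (fun a : ℝ => ⟪Ω, A (U a (A' Ω))⟫) Filter.atTop
      (nhds (⟪Ω, A Ω⟫ * ⟪Ω, A' Ω⟫))) :
    ⟪Ω, A (A' Ω)⟫ = ⟪Ω, A Ω⟫ * ⟪Ω, A' Ω⟫ :=
  lightlike_translation_cluster_factorization_general Ω U hU0 T hTr hTb hTh hTc A A' hsym hclus
end

section
/- Let f : ℝ² → ℂ be a Schwartz function with support contained in the right wedge W = {(t,x) : x > |t|}. Then the restriction of its Fourier transform to the mass shell p = m(cosh θ, sinh θ), m > 0, namely θ ↦ f̂(m cosh θ, m sinh θ), extends to a function holomorphic in the strip {z ∈ ℂ : −π < Im z < 0} and continuous on its closure. -/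
/-!
On the closed strip `-π ≤ Im z ≤ 0` and on the closed wedge `|t| ≤ x`, the phase
`i m (cosh z · t - sinh z · x)` has real part `m sin (Im z) (cosh (Re z) x - sinh (Re z) t)`,
which is `≤ 0` because `sin (Im z) ≤ 0` and `|sinh| ≤ cosh`. Hence the integrand is dominated
by `‖f‖` uniformly on the strip, which gives continuity, and its `z`-derivative is dominated
locally by a multiple of `‖a‖ ‖f a‖`, which gives holomorphy by differentiation under the
integral sign.
-/

open Complex MeasureTheory Real Metric Topology

theorem Complex.cosh_im (z : ℂ) : (cosh z).im = Real.sinh z.re * Real.sin z.im := by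
  simp only [Complex.cosh, div_ofNat_im, add_im, exp_im, neg_re, neg_im, Real.sin_neg, mul_neg,
    Real.sinh_eq]
  ring

theorem Complex.sinh_im (z : ℂ) : (sinh z).im = Real.cosh z.re * Real.sin z.im := by
  simp only [Complex.sinh, div_ofNat_im, sub_im, exp_im, neg_re, neg_im, Real.sin_neg, mul_neg,
    sub_neg_eq_add, Real.cosh_eq]
  ring

theorem Real.abs_sinh_le_cosh (x : ℝ) : |Real.sinh x| ≤ Real.cosh x := by
  rw [Real.abs_sinh, ← Real.cosh_abs]
  exact (Real.sinh_lt_cosh _).le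

/-- `i p·a` for the complexified mass-shell momentum `p = m (cosh z, sinh z)`. -/
noncomputable def massShellPhase (m : ℝ) (z : ℂ) (a : ℝ × ℝ) : ℂ :=
  I * (m * cosh z * a.1 - m * sinh z * a.2)

noncomputable def massShellTransform (μ : Measure (ℝ × ℝ)) (m : ℝ) (g : ℝ × ℝ → ℂ) (z : ℂ) :
    ℂ :=
  ∫ a, exp (massShellPhase m z a) * g a ∂μ

section MassShellPhase

variable {m : ℝ} {z : ℂ} {a : ℝ × ℝ}

theorem massShellPhase_re :
    (massShellPhase m z a).re =
      m * Real.sin z.im * (Real.cosh z.re * a.2 - Real.sinh z.re * a.1) := by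
  simp only [massShellPhase, mul_re, mul_im, sub_re, sub_im, I_re, I_im, ofReal_re, ofReal_im,
    Complex.cosh_im, Complex.sinh_im, zero_mul, mul_zero, one_mul, sub_zero, add_zero, zero_add]
  ring

theorem massShellPhase_re_nonpos (hm : 0 ≤ m) (hz₁ : -π ≤ z.im) (hz₂ : z.im ≤ 0)
    (ha : |a.1| ≤ a.2) : (massShellPhase m z a).re ≤ 0 := by
  have hsin : Real.sin z.im ≤ 0 := Real.sin_nonpos_of_nonpos_of_neg_pi_le hz₂ hz₁
  have hwedge : Real.sinh z.re * a.1 ≤ Real.cosh z.re * a.2 :=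
    calc Real.sinh z.re * a.1 ≤ |Real.sinh z.re| * |a.1| := by
          rw [← abs_mul]; exact le_abs_self _
      _ ≤ Real.cosh z.re * a.2 :=
          mul_le_mul (Real.abs_sinh_le_cosh _) ha (abs_nonneg _) (Real.cosh_pos _).le
  rw [massShellPhase_re]
  exact mul_nonpos_of_nonpos_of_nonneg (mul_nonpos_of_nonneg_of_nonpos hm hsin) (by linarith)

theorem norm_exp_massShellPhase_mul_le {g : ℝ × ℝ → ℂ} (hm : 0 ≤ m)
    (hz₁ : -π ≤ z.im) (hz₂ : z.im ≤ 0) (hsupp : ∀ a : ℝ × ℝ, ¬ |a.1| < a.2 → g a = 0)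
    (a : ℝ × ℝ) : ‖exp (massShellPhase m z a) * g a‖ ≤ ‖g a‖ := by
  by_cases ha : |a.1| < a.2
  · rw [norm_mul, Complex.norm_exp]
    exact mul_le_of_le_one_left (norm_nonneg _)
      (Real.exp_le_one_iff.mpr (massShellPhase_re_nonpos hm hz₁ hz₂ ha.le))
  · simp [hsupp a ha]

theorem hasDerivAt_massShellPhase :
    HasDerivAt (massShellPhase m · a) (I * (m * sinh z * a.1 - m * cosh z * a.2)) z :=
  ((((hasDerivAt_cosh z).const_mul (m : ℂ)).mul_const (a.1 : ℂ)).sub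
    (((hasDerivAt_sinh z).const_mul (m : ℂ)).mul_const (a.2 : ℂ))).const_mul I

theorem norm_deriv_massShellPhase_le :
    ‖I * (m * sinh z * a.1 - m * cosh z * a.2)‖ ≤ |m| * (‖sinh z‖ + ‖cosh z‖) * ‖a‖ :=
  calc ‖I * (m * sinh z * a.1 - m * cosh z * a.2)‖
      ≤ |m| * ‖sinh z‖ * |a.1| + |m| * ‖cosh z‖ * |a.2| := by
        simpa [norm_mul] using norm_sub_le (m * sinh z * a.1 : ℂ) (m * cosh z * a.2)
    _ ≤ |m| * ‖sinh z‖ * ‖a‖ + |m| * ‖cosh z‖ * ‖a‖ := by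
        gcongr
        exacts [norm_fst_le a, norm_snd_le a]
    _ = |m| * (‖sinh z‖ + ‖cosh z‖) * ‖a‖ := by ring

end MassShellPhase

section MassShellTransform

variable {μ : Measure (ℝ × ℝ)} {m : ℝ} {g : ℝ × ℝ → ℂ}

theorem aestronglyMeasurable_exp_massShellPhase_mul (hg : AEStronglyMeasurable g μ)
    (z : ℂ) :
    AEStronglyMeasurable (fun a => exp (massShellPhase m z a) * g a) μ :=
  (Continuous.aestronglyMeasurable (by unfold massShellPhase; fun_prop)).mul hg

theorem continuousOn_massShellTransform (hm : 0 ≤ m) (hg : Integrable g μ)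
    (hsupp : ∀ a : ℝ × ℝ, ¬ |a.1| < a.2 → g a = 0) :
    ContinuousOn (massShellTransform μ m g) {z : ℂ | -π ≤ z.im ∧ z.im ≤ 0} :=
  continuousOn_of_dominated (fun z _ => aestronglyMeasurable_exp_massShellPhase_mul hg.1 z)
    (fun _ hz => .of_forall (norm_exp_massShellPhase_mul_le hm hz.1 hz.2 hsupp)) hg.norm
    (.of_forall fun _ => Continuous.continuousOn (by unfold massShellPhase; fun_prop))

theorem differentiableOn_massShellTransform (hm : 0 ≤ m) (hg : Integrable g μ)
    (hg_moment : Integrable (fun a => ‖a‖ * ‖g a‖) μ)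
    (hsupp : ∀ a : ℝ × ℝ, ¬ |a.1| < a.2 → g a = 0) :
    DifferentiableOn ℂ (massShellTransform μ m g) {z : ℂ | -π < z.im ∧ z.im < 0} := by
  intro z₀ hz₀
  set s := {z : ℂ | -π < z.im ∧ z.im < 0} ∩ closedBall z₀ 1
  have hs : s ∈ 𝓝 z₀ :=
    Filter.inter_mem
      (((isOpen_lt continuous_const continuous_im).inter
        (isOpen_lt continuous_im continuous_const)).mem_nhds hz₀)
      (closedBall_mem_nhds z₀ one_pos)
  obtain ⟨C, hC⟩ := (isCompact_closedBall z₀ 1).exists_bound_of_continuousOn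
    (f := fun z => ‖sinh z‖ + ‖cosh z‖) (by fun_prop)
  have hmeas := aestronglyMeasurable_exp_massShellPhase_mul (m := m) hg.1
  have h_deriv_bound : ∀ a, ∀ z ∈ s,
      ‖I * (m * sinh z * a.1 - m * cosh z * a.2) * (exp (massShellPhase m z a) * g a)‖
        ≤ |m| * C * (‖a‖ * ‖g a‖) := by
    intro a z hz
    have hC' : ‖sinh z‖ + ‖cosh z‖ ≤ C := (le_abs_self _).trans (hC z hz.2)
    rw [norm_mul]
    calc _ ≤ (|m| * (‖sinh z‖ + ‖cosh z‖) * ‖a‖) * ‖g a‖ :=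
          mul_le_mul norm_deriv_massShellPhase_le
            (norm_exp_massShellPhase_mul_le hm hz.1.1.le hz.1.2.le hsupp a)
            (norm_nonneg _) (by positivity)
      _ ≤ |m| * C * (‖a‖ * ‖g a‖) := by rw [← mul_assoc]; gcongr
  have hderiv := hasDerivAt_integral_of_dominated_loc_of_deriv_le hs
    (.of_forall hmeas)
    (hg.norm.mono' (hmeas z₀)
      (.of_forall (norm_exp_massShellPhase_mul_le hm hz₀.1.le hz₀.2.le hsupp)))
    ((Continuous.aestronglyMeasurable (by fun_prop)).mul (hmeas z₀))
    (.of_forall h_deriv_bound) (hg_moment.const_mul _)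
    (.of_forall fun a z _ =>
      (hasDerivAt_massShellPhase.cexp.mul_const (g a)).congr_deriv (by ring))
  exact hderiv.2.differentiableAt.differentiableWithinAt

end MassShellTransform

/-- For a Schwartz function `f` on `ℝ²` supported in the right wedge
`W = {(t,x) : x > |t|}`, the restriction of its (Minkowski) Fourier transform
`f̂(p) = ∫ e^{i(p⁰t − p¹x)} f(t,x) dt dx` to the mass shell
`p = m(cosh θ, sinh θ)` extends to a function of the complex rapidity `z` which is
holomorphic in the strip `−π < Im z < 0` and continuous on its closure. -/
theorem wedge_support_mass_shell_analyticity
    (m : ℝ) (hm : 0 < m) (f : SchwartzMap (ℝ × ℝ) ℂ)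
    (hsupp : ∀ x : ℝ × ℝ, ¬ |x.1| < x.2 → f x = 0) :
    DifferentiableOn ℂ
      (fun z : ℂ => ∫ x : ℝ × ℝ,
        Complex.exp (Complex.I * ((m : ℂ) * Complex.cosh z * (x.1 : ℂ)
          - (m : ℂ) * Complex.sinh z * (x.2 : ℂ))) * f x)
      {z : ℂ | -π < z.im ∧ z.im < 0} ∧
    ContinuousOn
      (fun z : ℂ => ∫ x : ℝ × ℝ,
        Complex.exp (Complex.I * ((m : ℂ) * Complex.cosh z * (x.1 : ℂ)
          - (m : ℂ) * Complex.sinh z * (x.2 : ℂ))) * f x)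
      {z : ℂ | -π ≤ z.im ∧ z.im ≤ 0} := by
  have hmoment : Integrable (fun x => ‖x‖ * ‖f x‖) := by
    simpa only [pow_one] using f.integrable_pow_mul volume 1
  exact ⟨differentiableOn_massShellTransform hm.le f.integrable hmoment hsupp,
    continuousOn_massShellTransform hm.le f.integrable hsupp⟩
end

section
/- Let C ⊂ ℂ be the contour consisting of the real line ℝ (traversed left to right) and the shifted line ℝ − iπ (traversed right to left), and let f be holomorphic on the strip −π < Im z < 0, continuous and L¹ on its closure, with f(θ) and f(θ − iπ) the boundary values. Then for m > 0 the function g̃(x₊) = ∫_C f(z) e^{i m e^{z} x₊/2} dz of real x₊ vanishes for x₊ < 0. -/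
open Complex MeasureTheory Real

/-- Support property of the lightfront test function obtained from a wedge-supported
rapidity test function: if `f` is holomorphic in the strip `−π < Im z < 0`, continuous
and `L¹` on its closure, then the contour integral
`g̃(x₊) = ∫_C f(z) e^{i m e^z x₊ / 2} dz` over the contour `C` consisting of `ℝ`
(left to right) and `ℝ − iπ` (right to left) vanishes for `x₊ < 0`; i.e. `g̃` is
supported on the half-line `x₊ ≥ 0`. -/
theorem contour_integral_halfline_support
    (m : ℝ) (hm : 0 < m) (f : ℂ → ℂ)
    (hd : DifferentiableOn ℂ f {z : ℂ | -π < z.im ∧ z.im < 0})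
    (hc : ContinuousOn f {z : ℂ | -π ≤ z.im ∧ z.im ≤ 0})
    (hL1 : ∀ y ∈ Set.Icc (-π) (0 : ℝ),
      Integrable (fun θ : ℝ => f ((θ : ℂ) + (y : ℂ) * Complex.I)))
    (hL1strip : IntegrableOn f {z : ℂ | -π ≤ z.im ∧ z.im ≤ 0}) :
    ∀ xPlus : ℝ, xPlus < 0 →
      (∫ θ : ℝ, f (θ : ℂ) *
          Complex.exp (Complex.I * ((m : ℂ) * Complex.exp (θ : ℂ) * (xPlus : ℂ)) / 2))
        - (∫ θ : ℝ, f ((θ : ℂ) - (π : ℂ) * Complex.I) *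
            Complex.exp (Complex.I * ((m : ℂ) * Complex.exp ((θ : ℂ) - (π : ℂ) * Complex.I)
              * (xPlus : ℂ)) / 2)) = 0 := by
  intro x hx
  have hπ : (0:ℝ) < π := Real.pi_pos
  set S : Set ℂ := {z : ℂ | -π ≤ z.im ∧ z.im ≤ 0} with hSdef
  set F : ℂ → ℂ :=
    fun z => f z * Complex.exp (Complex.I * ((m : ℂ) * Complex.exp z * (x : ℂ)) / 2) with hFdef
  -- pointwise bound on the strip
  have hbound : ∀ z : ℂ, z ∈ S → ‖F z‖ ≤ ‖f z‖ := by
    intro z hz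
    have hre : (Complex.I * ((m : ℂ) * Complex.exp z * (x : ℂ)) / 2).re
        = -(m * x / 2) * (Real.exp z.re * Real.sin z.im) := by
      have h1 : Complex.I * ((m : ℂ) * Complex.exp z * (x : ℂ)) / 2
          = (((m * x / 2 : ℝ)) : ℂ) * Complex.I * Complex.exp z := by push_cast; ring
      rw [h1]
      simp [Complex.mul_re, Complex.mul_im, Complex.exp_im]
    have hsin : Real.sin z.im ≤ 0 :=
      Real.sin_nonpos_of_nonpos_of_neg_pi_le hz.2 hz.1
    have hexp : ‖Complex.exp (Complex.I * ((m : ℂ) * Complex.exp z * (x : ℂ)) / 2)‖ ≤ 1 := by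
      rw [Complex.norm_exp, hre]
      rw [Real.exp_le_one_iff]
      have hb : Real.exp z.re * Real.sin z.im ≤ 0 :=
        mul_nonpos_of_nonneg_of_nonpos (Real.exp_pos z.re).le hsin
      have ha : (0:ℝ) ≤ -(m * x / 2) := by nlinarith
      exact mul_nonpos_of_nonneg_of_nonpos ha hb
    calc ‖F z‖ = ‖f z‖ * ‖Complex.exp (Complex.I * ((m : ℂ) * Complex.exp z * (x : ℂ)) / 2)‖ :=
          norm_mul _ _
      _ ≤ ‖f z‖ * 1 := by gcongr
      _ = ‖f z‖ := mul_one _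
  -- continuity and differentiability of F
  have hgc : Continuous fun z : ℂ => Complex.exp (Complex.I * ((m : ℂ) * Complex.exp z * (x : ℂ)) / 2) := by
    fun_prop
  have hgd : Differentiable ℂ fun z : ℂ =>
      Complex.exp (Complex.I * ((m : ℂ) * Complex.exp z * (x : ℂ)) / 2) := by
    fun_prop
  have hFc : ContinuousOn F S := hc.mul hgc.continuousOn
  have hFd : DifferentiableOn ℂ F {z : ℂ | -π < z.im ∧ z.im < 0} :=
    hd.mul hgd.differentiableOn
  -- membership of lines in the strip
  have hmem0 : ∀ θ : ℝ, ((θ : ℂ)) ∈ S := by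
    intro θ; constructor <;> simp [hSdef]
    linarith
  have hmemline : ∀ (t y : ℝ), y ∈ Set.Icc (-π) (0:ℝ) → ((t : ℂ) + (y : ℂ) * Complex.I) ∈ S := by
    intro t y hy
    have : ((t : ℂ) + (y : ℂ) * Complex.I).im = y := by simp
    exact ⟨by rw [this]; exact hy.1, by rw [this]; exact hy.2⟩
  -- integrability on the horizontal lines
  have hline0 : Integrable (fun θ : ℝ => f (θ : ℂ)) := by
    have := hL1 0 ⟨by linarith, le_refl 0⟩
    simpa using this
  have hlineπ : Integrable (fun θ : ℝ => f ((θ : ℂ) - (π : ℂ) * Complex.I)) := by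
    have := hL1 (-π) ⟨le_refl _, by linarith⟩
    have heq : ∀ θ : ℝ, (θ : ℂ) + ((-π : ℝ) : ℂ) * Complex.I = (θ : ℂ) - (π : ℂ) * Complex.I := by
      intro θ; push_cast; ring
    simpa only [heq] using this
  have hFtopc : Continuous fun θ : ℝ => F (θ : ℂ) :=
    hFc.comp_continuous Complex.continuous_ofReal hmem0
  have hmemπ : ∀ θ : ℝ, ((θ : ℂ) - (π : ℂ) * Complex.I) ∈ S := by
    intro θ
    have : ((θ : ℂ) - (π : ℂ) * Complex.I).im = -π := by simp
    exact ⟨by rw [this], by rw [this]; linarith⟩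
  have hFbotc : Continuous fun θ : ℝ => F ((θ : ℂ) - (π : ℂ) * Complex.I) :=
    hFc.comp_continuous (by fun_prop) hmemπ
  have hFtopInt : Integrable (fun θ : ℝ => F (θ : ℂ)) :=
    hline0.mono hFtopc.aestronglyMeasurable
      (Filter.Eventually.of_forall fun θ => hbound _ (hmem0 θ))
  have hFbotInt : Integrable (fun θ : ℝ => F ((θ : ℂ) - (π : ℂ) * Complex.I)) :=
    hlineπ.mono hFbotc.aestronglyMeasurable
      (Filter.Eventually.of_forall fun θ => hbound _ (hmemπ θ))
  -- the integrable majorant h from Fubini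
  set h : ℝ → ℝ := fun t => ∫ y in Set.Icc (-π) (0:ℝ), ‖f ((t : ℂ) + (y : ℂ) * Complex.I)‖
    with hhdef
  have hS : MeasurableSet S := by
    have : S = Complex.im ⁻¹' Set.Icc (-π) 0 := by
      ext z; simp [hSdef, Set.mem_Icc]
    rw [this]
    exact Complex.measurable_im (measurableSet_Icc)
  have hprodInt : Integrable (fun p : ℝ × ℝ => f ((p.1 : ℂ) + (p.2 : ℂ) * Complex.I))
      (volume.prod (volume.restrict (Set.Icc (-π) (0:ℝ)))) := by
    have hmp : MeasurePreserving Complex.measurableEquivRealProd.symm volume volume :=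
      Complex.volume_preserving_equiv_real_prod.symm _
    have hpre : Complex.measurableEquivRealProd.symm ⁻¹' S
        = Set.univ ×ˢ Set.Icc (-π) (0:ℝ) := by
      ext p
      simp [hSdef, Complex.measurableEquivRealProd_symm_apply, Set.mem_Icc]
    have hmp2 : MeasurePreserving Complex.measurableEquivRealProd.symm
        (volume.restrict (Set.univ ×ˢ Set.Icc (-π) (0:ℝ))) (volume.restrict S) := by
      have := hmp.restrict_preimage hS
      rwa [hpre] at this
    have h2 : Integrable (f ∘ Complex.measurableEquivRealProd.symm)
        (volume.restrict (Set.univ ×ˢ Set.Icc (-π) (0:ℝ))) :=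
      (hmp2.integrable_comp_emb
        Complex.measurableEquivRealProd.symm.measurableEmbedding).2 hL1strip
    have hmeas : (volume : Measure (ℝ × ℝ)).restrict (Set.univ ×ˢ Set.Icc (-π) (0:ℝ))
        = volume.prod (volume.restrict (Set.Icc (-π) (0:ℝ))) := by
      rw [Measure.volume_eq_prod, ← Measure.prod_restrict, Measure.restrict_univ]
    rw [hmeas] at h2
    have hfun : (f ∘ Complex.measurableEquivRealProd.symm)
        = fun p : ℝ × ℝ => f ((p.1 : ℂ) + (p.2 : ℂ) * Complex.I) := by
      funext p
      simp [Function.comp, Complex.measurableEquivRealProd_symm_apply, Complex.mk_eq_add_mul_I]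
    rwa [hfun] at h2
  have hhInt : Integrable h := by
    have := hprodInt.integral_norm_prod_left
    simpa [hhdef] using this
  -- continuity in y on the segment
  have hsegc : ∀ t : ℝ, ContinuousOn (fun y : ℝ => f ((t : ℂ) + (y : ℂ) * Complex.I))
      (Set.Icc (-π) (0:ℝ)) := by
    intro t
    exact hc.comp (by fun_prop) (fun y hy => hmemline t y hy)
  have hsegFc : ∀ t : ℝ, ContinuousOn (fun y : ℝ => F ((t : ℂ) + (y : ℂ) * Complex.I))
      (Set.Icc (-π) (0:ℝ)) := by
    intro t
    exact hFc.comp (by fun_prop) (fun y hy => hmemline t y hy)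
  -- vertical integral bound
  have hVb : ∀ t : ℝ,
      ‖Complex.I • (∫ y in (-π)..(0:ℝ), F ((t : ℂ) + (y : ℂ) * Complex.I))‖ ≤ h t := by
    intro t
    rw [norm_smul, Complex.norm_I, one_mul]
    calc ‖∫ y in (-π)..(0:ℝ), F ((t : ℂ) + (y : ℂ) * Complex.I)‖
        ≤ ∫ y in (-π)..(0:ℝ), ‖F ((t : ℂ) + (y : ℂ) * Complex.I)‖ :=
          intervalIntegral.norm_integral_le_integral_norm (by linarith)
      _ = ∫ y in Set.Ioc (-π) (0:ℝ), ‖F ((t : ℂ) + (y : ℂ) * Complex.I)‖ := by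
          rw [intervalIntegral.integral_of_le (by linarith)]
      _ = ∫ y in Set.Icc (-π) (0:ℝ), ‖F ((t : ℂ) + (y : ℂ) * Complex.I)‖ :=
          (MeasureTheory.integral_Icc_eq_integral_Ioc).symm
      _ ≤ h t := by
          refine setIntegral_mono_on ?_ ?_ measurableSet_Icc ?_
          · exact ((hsegFc t).norm).integrableOn_compact isCompact_Icc
          · exact ((hsegc t).norm).integrableOn_compact isCompact_Icc
          · intro y hy
            exact hbound _ (hmemline t y hy)
  -- rectangle identity
  have rect : ∀ R : ℝ,
      ((∫ t in (-R)..R, F t) - ∫ t in (-R)..R, F ((t : ℂ) - (π : ℂ) * Complex.I))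
        = Complex.I • (∫ y in (-π)..(0:ℝ), F (((R : ℝ) : ℂ) + (y : ℂ) * Complex.I))
          - Complex.I • (∫ y in (-π)..(0:ℝ), F ((((-R : ℝ)) : ℂ) + (y : ℂ) * Complex.I)) := by
    intro R
    have hsub : Set.uIcc (-R) R ×ℂ Set.uIcc (-π) (0:ℝ) ⊆ S := by
      intro z hz
      rw [Complex.mem_reProdIm] at hz
      have := hz.2
      rw [Set.uIcc_of_le (by linarith : (-π) ≤ (0:ℝ))] at this
      exact ⟨this.1, this.2⟩
    have hsub2 : Set.Ioo (min (-R) R) (max (-R) R) ×ℂ Set.Ioo (min (-π) (0:ℝ)) (max (-π) (0:ℝ))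
        ⊆ {z : ℂ | -π < z.im ∧ z.im < 0} := by
      intro z hz
      rw [Complex.mem_reProdIm] at hz
      have h2 := hz.2
      rw [min_eq_left (by linarith : (-π) ≤ (0:ℝ)), max_eq_right (by linarith : (-π) ≤ (0:ℝ))]
        at h2
      exact ⟨h2.1, h2.2⟩
    have H := Complex.integral_boundary_rect_eq_zero_of_continuousOn_of_differentiableOn F
      (⟨-R, -π⟩ : ℂ) (⟨R, 0⟩ : ℂ) (hFc.mono hsub) (hFd.mono hsub2)
    have hre1 : ((⟨-R, -π⟩ : ℂ)).re = -R := rfl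
    have hre2 : ((⟨R, 0⟩ : ℂ)).re = R := rfl
    have him1 : ((⟨-R, -π⟩ : ℂ)).im = -π := rfl
    have him2 : ((⟨R, 0⟩ : ℂ)).im = 0 := rfl
    rw [hre1, hre2, him1, him2] at H
    have heq1 : ∀ t : ℝ, (t : ℂ) + ((-π : ℝ) : ℂ) * Complex.I
        = (t : ℂ) - (π : ℂ) * Complex.I := by intro t; push_cast; ring
    have heq2 : ∀ t : ℝ, (t : ℂ) + ((0 : ℝ) : ℂ) * Complex.I = (t : ℂ) := by
      intro t; push_cast; ring
    simp only [heq1, heq2] at H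
    have hR : ((-R : ℝ) : ℂ) = -(R : ℂ) := by push_cast; ring
    rw [hR] at H ⊢
    linear_combination -H
  -- limit of the horizontal integrals
  set L : ℂ := (∫ θ : ℝ, F (θ : ℂ))
    - ∫ θ : ℝ, F ((θ : ℂ) - (π : ℂ) * Complex.I) with hLdef
  have hTtend : Filter.Tendsto (fun R : ℝ => ∫ t in (-R)..R, F t) Filter.atTop (nhds (∫ θ : ℝ, F (θ : ℂ))) :=
    intervalIntegral_tendsto_integral hFtopInt Filter.tendsto_neg_atTop_atBot Filter.tendsto_id
  have hBtend : Filter.Tendsto (fun R : ℝ => ∫ t in (-R)..R, F ((t : ℂ) - (π : ℂ) * Complex.I)) Filter.atTop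
      (nhds (∫ θ : ℝ, F ((θ : ℂ) - (π : ℂ) * Complex.I))) :=
    intervalIntegral_tendsto_integral hFbotInt Filter.tendsto_neg_atTop_atBot Filter.tendsto_id
  have hDlim : Filter.Tendsto (fun R : ℝ =>
      (∫ t in (-R)..R, F t) - ∫ t in (-R)..R, F ((t : ℂ) - (π : ℂ) * Complex.I)) Filter.atTop
      (nhds L) := hTtend.sub hBtend
  -- the difference is bounded by h R + h (-R)
  have hDle : ∀ R : ℝ,
      ‖(∫ t in (-R)..R, F t) - ∫ t in (-R)..R, F ((t : ℂ) - (π : ℂ) * Complex.I)‖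
        ≤ h R + h (-R) := by
    intro R
    rw [rect R]
    calc ‖Complex.I • (∫ y in (-π)..(0:ℝ), F (((R : ℝ) : ℂ) + (y : ℂ) * Complex.I))
          - Complex.I • (∫ y in (-π)..(0:ℝ), F ((((-R : ℝ)) : ℂ) + (y : ℂ) * Complex.I))‖
        ≤ ‖Complex.I • (∫ y in (-π)..(0:ℝ), F (((R : ℝ) : ℂ) + (y : ℂ) * Complex.I))‖
          + ‖Complex.I • (∫ y in (-π)..(0:ℝ), F ((((-R : ℝ)) : ℂ) + (y : ℂ) * Complex.I))‖ :=
          norm_sub_le _ _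
      _ ≤ h R + h (-R) := add_le_add (hVb R) (hVb (-R))
  -- conclude: L = 0
  have hL0 : L = 0 := by
    by_contra hL0
    have hLpos : 0 < ‖L‖ := norm_pos_iff.2 hL0
    have hnorm : Filter.Tendsto (fun R : ℝ =>
        ‖(∫ t in (-R)..R, F t) - ∫ t in (-R)..R, F ((t : ℂ) - (π : ℂ) * Complex.I)‖) Filter.atTop
        (nhds ‖L‖) := hDlim.norm
    have hev : ∀ᶠ R : ℝ in Filter.atTop, ‖L‖ / 2
        < ‖(∫ t in (-R)..R, F t) - ∫ t in (-R)..R, F ((t : ℂ) - (π : ℂ) * Complex.I)‖ :=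
      hnorm.eventually (eventually_gt_nhds (by linarith))
    obtain ⟨T₀, hT₀⟩ := Filter.eventually_atTop.1 hev
    set G : ℝ → ℝ := fun t => h t + h (-t) with hGdef
    have hGle : ∀ R ≥ T₀, ‖L‖ / 2 ≤ G R := by
      intro R hR
      exact le_trans (le_of_lt (hT₀ R hR)) (hDle R)
    have hGInt : Integrable G := hhInt.add hhInt.comp_neg
    have htop : (⊤ : ENNReal) ≤ ∫⁻ t : ℝ, ENNReal.ofReal (G t) := by
      have h1 : (⊤ : ENNReal) = ∫⁻ _ in Set.Ioi T₀, ENNReal.ofReal (‖L‖ / 2) := by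
        rw [MeasureTheory.setLIntegral_const, Real.volume_Ioi]
        rw [ENNReal.mul_top]
        simp only [ne_eq, ENNReal.ofReal_eq_zero, not_le]
        linarith
      rw [h1]
      calc ∫⁻ _ in Set.Ioi T₀, ENNReal.ofReal (‖L‖ / 2)
          ≤ ∫⁻ t in Set.Ioi T₀, ENNReal.ofReal (G t) := by
            refine setLIntegral_mono_ae' measurableSet_Ioi (Filter.Eventually.of_forall ?_)
            intro t ht
            exact ENNReal.ofReal_le_ofReal (hGle t (le_of_lt ht))
        _ ≤ ∫⁻ t : ℝ, ENNReal.ofReal (G t) := setLIntegral_le_lintegral _ _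
    have hfin : (∫⁻ t : ℝ, ENNReal.ofReal (G t)) < ⊤ := by
      have h2 : (∫⁻ t : ℝ, ENNReal.ofReal (G t)) ≤ ∫⁻ t : ℝ, (‖G t‖₊ : ENNReal) := by
        refine lintegral_mono fun t => ?_
        rw [← enorm_eq_nnnorm, Real.enorm_eq_ofReal_abs]
        exact ENNReal.ofReal_le_ofReal (le_abs_self _)
      exact lt_of_le_of_lt h2 hGInt.hasFiniteIntegral
    exact absurd (lt_of_le_of_lt htop hfin) (lt_irrefl _)
  exact hL0
end
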